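/- Let (g,B) be a finite-dimensional ε-quadratic colour Lie algebra. The Casimir element Ω(g) = Σ_i x^i x_i ∈ U_ε(g), where {x_i} is a basis of g and {x^i} its dual basis with respect to B, is independent of the choice of basis and lies in the ε-centre Z_ε(g) = {x ∈ U_ε(g) : xy = ε(x,y)yx for all y ∈ U_ε(g)} of the ε-universal enveloping algebra. -/

import Mathlib

/-!
Under the isomorphism `g ⊗ g ≅ End g` induced by `B`, `Σᵢ xⁱ ⊗ xᵢ` corresponds to `id_g`, so for
every bilinear map `β` the sum `Σᵢ β xⁱ xᵢ` is independent of the dual pair: expanding one basis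
in another and its `B`-dual collapses the double sum. For centrality we may therefore use a
homogeneous basis `eₛ ∈ g_{dₛ}`; since `B` has degree `0` and pairs `g_a` perfectly with `g_{-a}`,
its dual basis `fₛ` is homogeneous of degree `-dₛ`. For `z ∈ g_c`, moving `z` across `fₛ eₛ` in
`U_ε(g)` leaves `Σₛ ε(c, -dₛ) fₛ [z, eₛ] + [z, fₛ] eₛ`, and invariance of `B` says exactly that
the two sums cancel. Finally, `g` generates `U_ε(g)`.
-/

open scoped BigOperators TensorProduct

/-- A commutation factor on an abelian group `Γ` with values in a field `k`. -/
structure CommFactor (k : Type) [Field k] (Γ : Type) [AddCommGroup Γ] : Type where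
  eps : Γ → Γ → k
  eps_symm : ∀ a b, eps a b * eps b a = 1
  eps_add_left : ∀ a b c, eps (a + b) c = eps a c * eps b c
  eps_add_right : ∀ a b c, eps a (b + c) = eps a b * eps a c

/-- A colour Lie algebra structure on a `Γ`-graded vector space. -/
structure IsColourLie {k Γ g : Type} [Field k] [AddCommGroup Γ] [DecidableEq Γ]
    [AddCommGroup g] [Module k g]
    (ε : Γ → Γ → k) (𝒢 : Γ → Submodule k g) (br : g →ₗ[k] g →ₗ[k] g) : Prop where
  internal : DirectSum.IsInternal 𝒢
  bracket_deg : ∀ a b : Γ, ∀ x ∈ 𝒢 a, ∀ y ∈ 𝒢 b, br x y ∈ 𝒢 (a + b)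
  antisymm : ∀ a b : Γ, ∀ x ∈ 𝒢 a, ∀ y ∈ 𝒢 b, br x y = -(ε a b) • br y x
  jacobi : ∀ a b c : Γ, ∀ x ∈ 𝒢 a, ∀ y ∈ 𝒢 b, ∀ z ∈ 𝒢 c,
      ε c a • br x (br y z) + ε a b • br y (br z x) + ε b c • br z (br x y) = 0

/-- An `ε`-quadratic structure: a non-degenerate `ε`-symmetric invariant bilinear
form of degree `0` on a colour Lie algebra. -/
structure IsEpsQuadratic {k Γ g : Type} [Field k] [AddCommGroup Γ]
    [AddCommGroup g] [Module k g]
    (ε : Γ → Γ → k) (𝒢 : Γ → Submodule k g) (br : g →ₗ[k] g →ₗ[k] g)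
    (B : g →ₗ[k] g →ₗ[k] k) : Prop where
  symm : ∀ a b : Γ, ∀ x ∈ 𝒢 a, ∀ y ∈ 𝒢 b, B x y = ε a b * B y x
  deg_zero : ∀ a b : Γ, a + b ≠ 0 → ∀ x ∈ 𝒢 a, ∀ y ∈ 𝒢 b, B x y = 0
  nondeg : ∀ x : g, (∀ y : g, B x y = 0) → x = 0
  invariant : ∀ a b : Γ, ∀ x ∈ 𝒢 a, ∀ y ∈ 𝒢 b, ∀ z : g,
      B (br x y) z = -(ε a b) * B y (br x z)

/-- The root space `g^α` for the action of a Cartan subalgebra `𝔥`. -/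
def rootSp {k g : Type} [Field k] [AddCommGroup g] [Module k g]
    (𝔥 : Submodule k g) (br : g →ₗ[k] g →ₗ[k] g) (α : Module.Dual k g) :
    Submodule k g where
  carrier := {x | ∀ h ∈ 𝔥, br h x = α h • x}
  add_mem' := by
    intro x y hx hy h hh
    rw [map_add, hx h hh, hy h hh, smul_add]
  zero_mem' := by intro h hh; simp
  smul_mem' := by
    intro c x hx h hh
    rw [map_smul, hx h hh, smul_comm]

/-- The `ε`-trace of an endomorphism, computed in a homogeneous basis `e`
with degrees `d`. -/
noncomputable def trEps {k Γ g ι : Type} [Field k] [AddCommGroup Γ]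
    [AddCommGroup g] [Module k g] [Fintype ι]
    (E : CommFactor k Γ) (e : Module.Basis ι k g) (d : ι → Γ) (f : g →ₗ[k] g) : k :=
  ∑ i, E.eps (d i) (d i) * e.repr (f (e i)) i

/-- The defining relations of the `ε`-universal enveloping algebra of a colour Lie
algebra with bracket `br`.  Taking `br = 0` yields the `ε`-symmetric algebra. -/
inductive EnvRel {k Γ g : Type} [Field k] [AddCommGroup Γ] [AddCommGroup g] [Module k g]
    (E : CommFactor k Γ) (𝒢 : Γ → Submodule k g) (br : g →ₗ[k] g →ₗ[k] g) :
    TensorAlgebra k g → TensorAlgebra k g → Prop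
  | mk (a b : Γ) (x y : g) (hx : x ∈ 𝒢 a) (hy : y ∈ 𝒢 b) :
      EnvRel E 𝒢 br (TensorAlgebra.ι k x * TensorAlgebra.ι k y)
        (E.eps a b • (TensorAlgebra.ι k y * TensorAlgebra.ι k x)
          + TensorAlgebra.ι k (br x y))

/-- The `ε`-universal enveloping algebra `U_ε(g)`. -/
abbrev Env {k Γ g : Type} [Field k] [AddCommGroup Γ] [AddCommGroup g] [Module k g]
    (E : CommFactor k Γ) (𝒢 : Γ → Submodule k g) (br : g →ₗ[k] g →ₗ[k] g) :=
  RingQuot (EnvRel E 𝒢 br)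

/-- The canonical image of `x : g` in `U_ε(g)`. -/
noncomputable def uMk {k Γ g : Type} [Field k] [AddCommGroup Γ] [AddCommGroup g] [Module k g]
    (E : CommFactor k Γ) (𝒢 : Γ → Submodule k g) (br : g →ₗ[k] g →ₗ[k] g) (x : g) :
    Env E 𝒢 br :=
  RingQuot.mkAlgHom k (EnvRel E 𝒢 br) (TensorAlgebra.ι k x)
section DualPair

variable {k g M ι : Type} [Field k] [AddCommGroup g] [Module k g] [AddCommGroup M] [Module k M]
  [DecidableEq ι]
  {B : g →ₗ[k] g →ₗ[k] k} {xb : Module.Basis ι k g} {xd : ι → g}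

theorem flip_apply_eq_coord_of_dual
    (hdual : ∀ i j, B (xb i) (xd j) = if i = j then (1 : k) else 0) (i : ι) :
    B.flip (xd i) = xb.coord i :=
  xb.ext fun j => by simp [hdual, Finsupp.single_apply, eq_comm]

theorem sum_apply_dual_smul_eq_of_dual [Fintype ι]
    (hdual : ∀ i j, B (xb i) (xd j) = if i = j then (1 : k) else 0) (v : g) :
    ∑ i, B v (xd i) • xb i = v := by
  simp_rw [← LinearMap.flip_apply (f := B), flip_apply_eq_coord_of_dual hdual,
    Module.Basis.coord_apply, xb.sum_repr]

theorem injective_flip_of_dual [Fintype ι]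
    (hdual : ∀ i j, B (xb i) (xd j) = if i = j then (1 : k) else 0) :
    Function.Injective B.flip := by
  have : FiniteDimensional k g := .of_basis xb
  rw [LinearMap.injective_iff_surjective_of_finrank_eq_finrank Subspace.dual_finrank_eq.symm]
  intro φ
  refine ⟨∑ i, φ (xb i) • xd i, ?_⟩
  simp [flip_apply_eq_coord_of_dual hdual]

theorem sum_apply_basis_smul_eq_of_dual [Fintype ι]
    (hdual : ∀ i j, B (xb i) (xd j) = if i = j then (1 : k) else 0) (v : g) :
    ∑ i, B (xb i) v • xd i = v :=
  injective_flip_of_dual hdual <| by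
    simpa [flip_apply_eq_coord_of_dual hdual] using xb.sum_dual_apply_smul_coord (B.flip v)

theorem sum_bilin_dual_basis_eq [Fintype ι] (β : g →ₗ[k] g →ₗ[k] M)
    (hdual : ∀ i j, B (xb i) (xd j) = if i = j then (1 : k) else 0)
    {ι' : Type} [Fintype ι'] [DecidableEq ι'] {xb' : Module.Basis ι' k g} {xd' : ι' → g}
    (hdual' : ∀ i j, B (xb' i) (xd' j) = if i = j then (1 : k) else 0) :
    ∑ i, β (xd i) (xb i) = ∑ j, β (xd' j) (xb' j) := by
  calc ∑ i, β (xd i) (xb i)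
      = ∑ i, β (∑ j, B (xb' j) (xd i) • xd' j) (xb i) := by
        simp_rw [sum_apply_basis_smul_eq_of_dual hdual']
    _ = ∑ j, β (xd' j) (∑ i, B (xb' j) (xd i) • xb i) := by
        simp_rw [map_sum, map_smul, LinearMap.sum_apply, LinearMap.smul_apply]
        exact Finset.sum_comm
    _ = ∑ j, β (xd' j) (xb' j) := by
        simp_rw [sum_apply_dual_smul_eq_of_dual hdual]

theorem sum_smul_bilin_map_eq_of_dual [Fintype ι] (β : g →ₗ[k] g →ₗ[k] M) (w : ι → k)
    {φ χ : g →ₗ[k] g}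
    (hdual : ∀ i j, B (xb i) (xd j) = if i = j then (1 : k) else 0)
    (hadj : ∀ i j, w i * B (φ (xb i)) (xd j) = B (xb i) (χ (xd j))) :
    ∑ i, w i • β (xd i) (φ (xb i)) = ∑ i, β (χ (xd i)) (xb i) := by
  calc ∑ i, w i • β (xd i) (φ (xb i))
      = ∑ i, w i • β (xd i) (∑ j, B (φ (xb i)) (xd j) • xb j) := by
        simp_rw [sum_apply_dual_smul_eq_of_dual hdual]
    _ = ∑ j, β (∑ i, B (xb i) (χ (xd j)) • xd i) (xb j) := by
        simp_rw [map_sum, map_smul, LinearMap.sum_apply, LinearMap.smul_apply, Finset.smul_sum,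
          smul_smul, hadj]
        exact Finset.sum_comm
    _ = ∑ j, β (χ (xd j)) (xb j) := by
        simp_rw [sum_apply_basis_smul_eq_of_dual hdual]

end DualPair

section Graded

variable {k Γ g : Type} [Field k] [AddCommGroup Γ] [DecidableEq Γ] [AddCommGroup g] [Module k g]
  {𝒢 : Γ → Submodule k g} {B : g →ₗ[k] g →ₗ[k] k}

theorem injective_flip_domRestrict₁₂_neg (hint : DirectSum.IsInternal 𝒢)
    (hdeg : ∀ a b : Γ, a + b ≠ 0 → ∀ x ∈ 𝒢 a, ∀ y ∈ 𝒢 b, B x y = 0)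
    (hB : Function.Injective B.flip) (a : Γ) :
    Function.Injective (B.domRestrict₁₂ (𝒢 a) (𝒢 (-a))).flip := by
  rw [← LinearMap.ker_eq_bot, LinearMap.ker_eq_bot']
  intro w hw
  have hvanish : ∀ b, 𝒢 b ≤ LinearMap.ker (B.flip w) := by
    intro b x hx
    by_cases hba : b = a
    · subst hba
      exact LinearMap.congr_fun hw ⟨x, hx⟩
    · exact hdeg b (-a) (by rwa [← sub_eq_add_neg, sub_ne_zero]) x hx w w.2
  have hzero : B.flip w = 0 := by
    rw [← LinearMap.ker_eq_top, eq_top_iff, ← hint.submodule_iSup_eq_top]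
    exact iSup_le hvanish
  exact Subtype.ext (hB (hzero.trans (map_zero _).symm))

theorem bijective_flip_domRestrict₁₂_neg [FiniteDimensional k g]
    (hint : DirectSum.IsInternal 𝒢)
    (hdeg : ∀ a b : Γ, a + b ≠ 0 → ∀ x ∈ 𝒢 a, ∀ y ∈ 𝒢 b, B x y = 0)
    (hB : Function.Injective B.flip) (a : Γ) :
    Function.Bijective (B.domRestrict₁₂ (𝒢 a) (𝒢 (-a))).flip := by
  have hinj := injective_flip_domRestrict₁₂_neg hint hdeg hB
  have hle : ∀ a, Module.finrank k (𝒢 (-a)) ≤ Module.finrank k (𝒢 a) := fun a => by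
    simpa [Subspace.dual_finrank_eq] using LinearMap.finrank_le_finrank_of_injective (hinj a)
  have heq : Module.finrank k (𝒢 (-a)) = Module.finrank k (Module.Dual k (𝒢 a)) := by
    rw [Subspace.dual_finrank_eq]
    have hle' := hle (-a)
    rw [neg_neg] at hle'
    exact (hle a).antisymm hle'
  exact ⟨hinj a, (LinearMap.injective_iff_surjective_of_finrank_eq_finrank heq).mp (hinj a)⟩

theorem exists_homogeneous_dual_basis [FiniteDimensional k g] (hint : DirectSum.IsInternal 𝒢)
    (hdeg : ∀ a b : Γ, a + b ≠ 0 → ∀ x ∈ 𝒢 a, ∀ y ∈ 𝒢 b, B x y = 0)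
    (hB : Function.Injective B.flip) :
    ∃ (σ : Type) (_ : Fintype σ) (_ : DecidableEq σ) (e : Module.Basis σ k g) (f : σ → g)
      (d : σ → Γ), (∀ s, e s ∈ 𝒢 (d s)) ∧ (∀ s, f s ∈ 𝒢 (-d s)) ∧
        ∀ s t, B (e s) (f t) = if s = t then (1 : k) else 0 := by
  let b a := Module.finBasis k (𝒢 a)
  let e := hint.collectedBasis b
  have : Fintype (Σ a, Fin (Module.finrank k (𝒢 a))) := FiniteDimensional.fintypeBasisIndex e
  choose f hf using fun s : Σ a, Fin (Module.finrank k (𝒢 a)) =>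
    (bijective_flip_domRestrict₁₂_neg hint hdeg hB s.1).2 ((b s.1).coord s.2)
  refine ⟨_, inferInstance, inferInstance, e, fun s => f s, Sigma.fst, hint.collectedBasis_mem b,
    fun s => (f s).2, ?_⟩
  rintro ⟨a, i⟩ ⟨c, j⟩
  by_cases hac : a = c
  · subst hac
    have := LinearMap.congr_fun (hf ⟨a, j⟩) (b a i)
    simp only [LinearMap.flip_apply, LinearMap.domRestrict₁₂_apply] at this
    simp [e, hint.collectedBasis_coe, this, Finsupp.single_apply]
  · rw [hdeg a (-c) (by rwa [← sub_eq_add_neg, sub_ne_zero]) _ (hint.collectedBasis_mem b ⟨a, i⟩) _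
      (f ⟨c, j⟩).2]
    simp [hac]

end Graded

namespace CommFactor

variable {k Γ : Type} [Field k] [AddCommGroup Γ] (E : CommFactor k Γ)

theorem eps_ne_zero (a b : Γ) : E.eps a b ≠ 0 :=
  left_ne_zero_of_mul_eq_one (E.eps_symm a b)

theorem eps_zero_right (a : Γ) : E.eps a 0 = 1 := by
  have h := E.eps_add_right a 0 0
  rw [add_zero] at h
  exact mul_left_cancel₀ (E.eps_ne_zero a 0) (h.symm.trans (mul_one _).symm)

theorem eps_neg_right_mul (a b : Γ) : E.eps a (-b) * E.eps a b = 1 := by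
  rw [← E.eps_add_right, neg_add_cancel, eps_zero_right]

end CommFactor

section Enveloping

variable {k Γ g : Type} [Field k] [AddCommGroup Γ] [AddCommGroup g] [Module k g]
  (E : CommFactor k Γ) (𝒢 : Γ → Submodule k g) (br : g →ₗ[k] g →ₗ[k] g)

noncomputable def uMkLinearMap : g →ₗ[k] Env E 𝒢 br :=
  (RingQuot.mkAlgHom k (EnvRel E 𝒢 br)).toLinearMap ∘ₗ TensorAlgebra.ι k

@[simp]
theorem uMkLinearMap_apply (x : g) : uMkLinearMap E 𝒢 br x = uMk E 𝒢 br x := rfl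

theorem adjoin_range_uMk : Algebra.adjoin k (Set.range (uMk E 𝒢 br)) = ⊤ := by
  rw [show uMk E 𝒢 br = RingQuot.mkAlgHom k (EnvRel E 𝒢 br) ∘ TensorAlgebra.ι k from rfl,
    Set.range_comp, ← AlgHom.map_adjoin, TensorAlgebra.adjoin_range_ι, Algebra.map_top,
    AlgHom.range_eq_top]
  exact RingQuot.mkAlgHom_surjective k _

variable {E 𝒢 br}

theorem uMk_mul_uMk {a b : Γ} {x y : g} (hx : x ∈ 𝒢 a) (hy : y ∈ 𝒢 b) :
    uMk E 𝒢 br x * uMk E 𝒢 br y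
      = E.eps a b • (uMk E 𝒢 br y * uMk E 𝒢 br x) + uMk E 𝒢 br (br x y) := by
  simpa only [map_add, map_mul, map_smul, uMk] using
    RingQuot.mkAlgHom_rel k (EnvRel.mk (E := E) (br := br) a b x y hx hy)

theorem uMk_mul_uMk_mul_uMk {a b c : Γ} {x y z : g} (hx : x ∈ 𝒢 a) (hy : y ∈ 𝒢 b)
    (hz : z ∈ 𝒢 c) :
    uMk E 𝒢 br z * (uMk E 𝒢 br x * uMk E 𝒢 br y)
      = E.eps c (a + b) • (uMk E 𝒢 br x * uMk E 𝒢 br y * uMk E 𝒢 br z)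
        + (E.eps c a • (uMk E 𝒢 br x * uMk E 𝒢 br (br z y))
          + uMk E 𝒢 br (br z x) * uMk E 𝒢 br y) := by
  rw [← mul_assoc, uMk_mul_uMk hz hx, add_mul, smul_mul_assoc, mul_assoc, uMk_mul_uMk hz hy,
    E.eps_add_right]
  simp only [mul_add, mul_smul_comm, smul_add, smul_smul, mul_assoc]
  abel

end Enveloping

section Casimir

variable {k Γ g : Type} [Field k] [AddCommGroup Γ] [AddCommGroup g] [Module k g]
  (E : CommFactor k Γ) (𝒢 : Γ → Submodule k g) (br : g →ₗ[k] g →ₗ[k] g)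

noncomputable def casimir {ι : Type} [Fintype ι] (xb xd : ι → g) : Env E 𝒢 br :=
  ∑ i, uMk E 𝒢 br (xd i) * uMk E 𝒢 br (xb i)

variable {E 𝒢 br} {B : g →ₗ[k] g →ₗ[k] k}

theorem casimir_eq_of_dual {ι ι' : Type} [Fintype ι] [DecidableEq ι] [Fintype ι']
    [DecidableEq ι'] {xb : Module.Basis ι k g} {xd : ι → g} {xb' : Module.Basis ι' k g}
    {xd' : ι' → g} (hdual : ∀ i j, B (xb i) (xd j) = if i = j then (1 : k) else 0)
    (hdual' : ∀ i j, B (xb' i) (xd' j) = if i = j then (1 : k) else 0) :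
    casimir E 𝒢 br xb xd = casimir E 𝒢 br xb' xd' :=
  sum_bilin_dual_basis_eq ((LinearMap.mul k _).compl₁₂ (uMkLinearMap E 𝒢 br)
    (uMkLinearMap E 𝒢 br)) hdual hdual'

variable {σ : Type} [Fintype σ] [DecidableEq σ] {e : Module.Basis σ k g} {f : σ → g} {d : σ → Γ}

theorem commute_uMk_casimir (hquad : IsEpsQuadratic E.eps 𝒢 br B)
    (he : ∀ s, e s ∈ 𝒢 (d s)) (hf : ∀ s, f s ∈ 𝒢 (-d s))
    (hdual : ∀ s t, B (e s) (f t) = if s = t then (1 : k) else 0) {c : Γ} {z : g}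
    (hz : z ∈ 𝒢 c) : Commute (uMk E 𝒢 br z) (casimir E 𝒢 br e f) := by
  let β := (LinearMap.mul k (Env E 𝒢 br)).compl₁₂ (uMkLinearMap E 𝒢 br) (uMkLinearMap E 𝒢 br)
  have hcancel : ∑ s, E.eps c (-d s) • β (f s) (br z (e s)) = ∑ s, β (-br z (f s)) (e s) :=
    sum_smul_bilin_map_eq_of_dual β _ hdual (φ := br z) (χ := -br z) fun s t => by
      rw [hquad.invariant c (d s) z hz (e s) (he s), LinearMap.neg_apply, map_neg]
      linear_combination -B (e s) (br z (f t)) * E.eps_neg_right_mul c (d s)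
  simp only [β, map_neg, LinearMap.neg_apply, LinearMap.compl₁₂_apply, LinearMap.mul_apply',
    uMkLinearMap_apply, Finset.sum_neg_distrib] at hcancel
  calc uMk E 𝒢 br z * casimir E 𝒢 br e f
      = ∑ s, (uMk E 𝒢 br (f s) * uMk E 𝒢 br (e s) * uMk E 𝒢 br z
          + (E.eps c (-d s) • (uMk E 𝒢 br (f s) * uMk E 𝒢 br (br z (e s)))
            + uMk E 𝒢 br (br z (f s)) * uMk E 𝒢 br (e s))) := by
        rw [casimir, Finset.mul_sum]
        refine Finset.sum_congr rfl fun s _ => ?_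
        rw [uMk_mul_uMk_mul_uMk (hf s) (he s) hz, neg_add_cancel, E.eps_zero_right, one_smul]
    _ = casimir E 𝒢 br e f * uMk E 𝒢 br z := by
        rw [Finset.sum_add_distrib, Finset.sum_add_distrib, hcancel, neg_add_cancel, add_zero,
          casimir, Finset.sum_mul]

theorem commute_casimir [DecidableEq Γ] (hint : DirectSum.IsInternal 𝒢)
    (hquad : IsEpsQuadratic E.eps 𝒢 br B) (he : ∀ s, e s ∈ 𝒢 (d s)) (hf : ∀ s, f s ∈ 𝒢 (-d s))
    (hdual : ∀ s t, B (e s) (f t) = if s = t then (1 : k) else 0) (y : Env E 𝒢 br) :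
    Commute (casimir E 𝒢 br e f) y := by
  have hgen : ∀ z, Commute (casimir E 𝒢 br e f) (uMkLinearMap E 𝒢 br z) := by
    intro z
    have hz : z ∈ ⨆ a, 𝒢 a := by
      rw [hint.submodule_iSup_eq_top]
      trivial
    refine Submodule.iSup_induction 𝒢 (motive := fun z => Commute _ (uMkLinearMap E 𝒢 br z)) hz
      (fun c z hz => ?_) ?_ fun x y hx hy => ?_
    · exact (commute_uMk_casimir hquad he hf hdual hz).symm
    · simpa only [map_zero] using Commute.zero_right _
    · simpa only [map_add] using hx.add_right hy
  refine Algebra.commute_of_mem_adjoin_of_forall_mem_commute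
    (adjoin_range_uMk E 𝒢 br ▸ Algebra.mem_top) ?_
  rintro _ ⟨z, rfl⟩
  exact hgen z

end Casimir

/-- The Casimir element `Ω(g) = Σᵢ xⁱ xᵢ ∈ U_ε(g)` is independent of the choice of
basis and lies in the `ε`-centre of `U_ε(g)` (it has degree `0`, so `ε`-centrality
means it commutes with every element). -/
theorem casimir_basis_indep_central {k Γ g : Type} [Field k] [AddCommGroup Γ] [DecidableEq Γ]
    [AddCommGroup g] [Module k g]
    {ι ι' : Type} [Fintype ι] [DecidableEq ι] [Fintype ι'] [DecidableEq ι']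
    (E : CommFactor k Γ)
    (𝒢 : Γ → Submodule k g) (br : g →ₗ[k] g →ₗ[k] g)
    (hLie : IsColourLie E.eps 𝒢 br)
    (B : g →ₗ[k] g →ₗ[k] k) (hquad : IsEpsQuadratic E.eps 𝒢 br B)
    (xb : Module.Basis ι k g) (xd : ι → g)
    (hdual : ∀ i j, B (xb i) (xd j) = if i = j then (1 : k) else 0)
    (xb' : Module.Basis ι' k g) (xd' : ι' → g)
    (hdual' : ∀ i j, B (xb' i) (xd' j) = if i = j then (1 : k) else 0) :
    (∑ i, uMk E 𝒢 br (xd i) * uMk E 𝒢 br (xb i)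
        = ∑ j, uMk E 𝒢 br (xd' j) * uMk E 𝒢 br (xb' j)) ∧
    (∀ y : Env E 𝒢 br,
        (∑ i, uMk E 𝒢 br (xd i) * uMk E 𝒢 br (xb i)) * y
          = y * ∑ i, uMk E 𝒢 br (xd i) * uMk E 𝒢 br (xb i)) := by
  have : FiniteDimensional k g := .of_basis xb
  obtain ⟨σ, _, _, e, f, d, he, hf, hef⟩ :=
    exists_homogeneous_dual_basis hLie.internal hquad.deg_zero (injective_flip_of_dual hdual)
  have hΩ : casimir E 𝒢 br xb xd = casimir E 𝒢 br e f := casimir_eq_of_dual hdual hef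
  refine ⟨casimir_eq_of_dual hdual hdual', fun y => ?_⟩
  change casimir E 𝒢 br xb xd * y = y * casimir E 𝒢 br xb xd
  rw [hΩ]
  exact (commute_casimir hLie.internal hquad he hf hef y).eq
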